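/- arXiv:1202.5945 — 2 statements merged into one kernel-verified Lean document; each statement's English description precedes it below -/
import Mathlib

section
/- Let d ≥ 1 and let V ⊂ ℝ^d be a finite point set with |V| ≥ 2. Let D = max{‖x − y‖ : x,y ∈ V}/min{‖x − y‖ : x,y ∈ V, x ≠ y}. Then there is a constant C = C(d) (one may take C = 2·30^d) such that every minimum spanning tree MST(V) of V satisfies I(MST(V)) ≤ C·(⌈log₂ D⌉ + 1). -/
open MeasureTheory Filter
open scoped Classical

noncomputable section

/-- Points in `d`-dimensional Euclidean space. -/
abbrev Pt (d : ℕ) : Type := EuclideanSpace ℝ (Fin d)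

/-- The transmission radius of vertex `i` in the graph `G` on the points `x`:
the distance to its furthest neighbour (`0` if `i` is isolated). -/
noncomputable def rad {d n : ℕ} (x : Fin n → Pt d) (G : SimpleGraph (Fin n)) (i : Fin n) : ℝ :=
  ((Finset.univ.filter fun j => G.Adj i j).sup fun j =>
    (⟨dist (x i) (x j), dist_nonneg⟩ : NNReal) : NNReal)

/-- The interference at a point `p` caused by the graph `G` on the points `x`:
the number of balls `B(x i, rad x G i)` containing `p`. -/
noncomputable def interAt {d n : ℕ} (x : Fin n → Pt d) (G : SimpleGraph (Fin n)) (p : Pt d) : ℕ :=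
  (Finset.univ.filter fun i => dist p (x i) ≤ rad x G i).card

/-- The (maximum receiver-centric) interference of `G`:
the maximum interference at a vertex. -/
noncomputable def interG {d n : ℕ} (x : Fin n → Pt d) (G : SimpleGraph (Fin n)) : ℕ :=
  Finset.univ.sup fun i => interAt x G (x i)

/-- Total Euclidean edge length of `G` on the points `x`. -/
noncomputable def tlen {d n : ℕ} (x : Fin n → Pt d) (G : SimpleGraph (Fin n)) : ℝ :=
  ∑ e ∈ G.edgeFinset, Sym2.lift ⟨fun i j => dist (x i) (x j), fun i j => dist_comm _ _⟩ e

/-- `G` is a minimum spanning tree of the points `x`: a connected graph on the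
vertex set of minimum total Euclidean edge length. -/
def IsMST {d n : ℕ} (x : Fin n → Pt d) (G : SimpleGraph (Fin n)) : Prop :=
  G.Connected ∧ ∀ H : SimpleGraph (Fin n), H.Connected → tlen x G ≤ tlen x H

/-!
Sort the balls containing a vertex `p` by the dyadic class `[2ᵏ Dmin, 2ᵏ⁺¹ Dmin)` of their radius;
there are `⌈log₂ D⌉ + 1` classes. In the class of scale `ℓ`, record each ball by the cells of its
centre `u` and of its furthest neighbour `f u` in a grid of mesh `ℓ / (d + 1)` around `p`. Both
points lie within `4ℓ` of `p`, so there are at most `((8d + 9)ᵈ)²` such pairs of cells, and the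
record is injective: equal records would give two MST edges of length at least `ℓ` whose endpoints
are pairwise closer than `ℓ`, and the cut property of minimum spanning trees forbids this.
-/

namespace SimpleGraph

variable {V : Type*} {G H : SimpleGraph V}

lemma Connected.of_adj_reachable (hG : G.Connected) (h : ∀ ⦃s t⦄, G.Adj s t → H.Reachable s t) :
    H.Connected := by
  have : Nonempty V := hG.nonempty
  refine Connected.mk fun u v => ?_
  have huv := hG.preconnected u v
  rw [reachable_eq_reflTransGen] at huv ⊢
  exact Relation.reflTransGen_closed
    (fun s t hst => (reachable_eq_reflTransGen (G := H)) ▸ h hst) u v huv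

lemma Preconnected.reachable_deleteEdges_or (hG : G.Preconnected) (u a w : V) :
    (G.deleteEdges {s(u, a)}).Reachable u w ∨ (G.deleteEdges {s(u, a)}).Reachable a w := by
  have huw := hG u w
  rw [reachable_eq_reflTransGen] at huw
  induction huw with
  | refl => exact Or.inl .rfl
  | @tail b c _ hbc ih =>
    by_cases he : s(b, c) = s(u, a)
    · rcases Sym2.eq_iff.mp he with ⟨-, rfl⟩ | ⟨-, rfl⟩
      · exact Or.inr .rfl
      · exact Or.inl .rfl
    · have hR : (G.deleteEdges {s(u, a)}).Adj b c := (deleteEdges_adj ..).mpr ⟨hbc, he⟩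
      exact ih.imp (·.trans hR.reachable) (·.trans hR.reachable)

end SimpleGraph

open SimpleGraph (edge sup_adj edge_adj deleteEdges_adj mem_edgeFinset edgeSet_sup
  edgeSet_deleteEdges edgeSet_edge_subset)

section MST

variable {d n : ℕ} {x : Fin n → Pt d} {G : SimpleGraph (Fin n)}

def edgeLen (x : Fin n → Pt d) : Sym2 (Fin n) → ℝ :=
  Sym2.lift ⟨fun i j => dist (x i) (x j), fun _ _ => dist_comm _ _⟩

lemma edgeLen_nonneg (e : Sym2 (Fin n)) : 0 ≤ edgeLen x e := by
  induction e using Sym2.ind with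
  | _ i j => exact (dist_nonneg : 0 ≤ dist (x i) (x j))

lemma tlen_deleteEdges_sup_edge_le {u a : Fin n} (h : G.Adj u a) (s t : Fin n) :
    tlen x (G.deleteEdges {s(u, a)} ⊔ edge s t) ≤
      tlen x G - dist (x u) (x a) + dist (x s) (x t) := by
  calc tlen x (G.deleteEdges {s(u, a)} ⊔ edge s t)
      ≤ ∑ e ∈ insert s(s, t) (G.edgeFinset.erase s(u, a)), edgeLen x e := by
        refine Finset.sum_le_sum_of_subset_of_nonneg (fun e he => ?_) fun e _ _ => edgeLen_nonneg e
        simp only [mem_edgeFinset, edgeSet_sup, edgeSet_deleteEdges] at he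
        rcases he with ⟨he, hne⟩ | he
        · exact Finset.mem_insert_of_mem (Finset.mem_erase.mpr ⟨hne, mem_edgeFinset.mpr he⟩)
        · exact Finset.mem_insert.mpr (Or.inl (edgeSet_edge_subset he))
    _ ≤ edgeLen x s(s, t) + ∑ e ∈ G.edgeFinset.erase s(u, a), edgeLen x e := by
        by_cases hmem : s(s, t) ∈ G.edgeFinset.erase s(u, a)
        · rw [Finset.insert_eq_of_mem hmem]
          linarith [edgeLen_nonneg (x := x) s(s, t)]
        · rw [Finset.sum_insert hmem]
    _ = tlen x G - dist (x u) (x a) + dist (x s) (x t) := by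
        rw [Finset.sum_erase_eq_sub (mem_edgeFinset.mpr h)]
        simp only [edgeLen, tlen, Sym2.lift_mk]
        ring

namespace IsMST

variable (hG : IsMST x G)
include hG

theorem dist_le_of_reachable_deleteEdges {u a s t : Fin n} (h : G.Adj u a)
    (hs : (G.deleteEdges {s(u, a)}).Reachable u s) (ht : (G.deleteEdges {s(u, a)}).Reachable a t) :
    dist (x u) (x a) ≤ dist (x s) (x t) := by
  set H := G.deleteEdges {s(u, a)} ⊔ edge s t
  have hst : H.Reachable s t := by
    rcases eq_or_ne s t with rfl | hne
    · rfl
    · exact SimpleGraph.Adj.reachable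
        ((sup_adj ..).mpr (Or.inr ((edge_adj ..).mpr ⟨Or.inl ⟨rfl, rfl⟩, hne⟩)))
  have hua : H.Reachable u a :=
    (hs.mono le_sup_left).trans (hst.trans (ht.mono le_sup_left).symm)
  have hconn : H.Connected := by
    refine hG.1.of_adj_reachable fun v w hvw => ?_
    by_cases he : s(v, w) = s(u, a)
    · rcases Sym2.eq_iff.mp he with ⟨rfl, rfl⟩ | ⟨rfl, rfl⟩
      exacts [hua, hua.symm]
    · exact SimpleGraph.Adj.reachable
        ((sup_adj ..).mpr (Or.inl ((deleteEdges_adj ..).mpr ⟨hvw, he⟩)))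
  linarith [hG.2 _ hconn, tlen_deleteEdges_sup_edge_le (x := x) h s t]

theorem reachable_deleteEdges_of_dist_lt {u a w : Fin n} (h : G.Adj u a)
    (hw : dist (x u) (x w) < dist (x u) (x a)) : (G.deleteEdges {s(u, a)}).Reachable u w :=
  (hG.1.preconnected.reachable_deleteEdges_or u a w).resolve_right fun haw =>
    hw.not_ge (hG.dist_le_of_reachable_deleteEdges h .rfl haw)

/-- After deleting `ua`, the short edge `uv` keeps `v`, hence `b`, on the side of `u`, so `ab`
reconnects the tree and is no shorter than `ua`; symmetrically `uv` is no shorter than `vb`. -/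
theorem false_of_dist_lt_of_dist_lt {u a v b : Fin n} (hua : G.Adj u a) (hvb : G.Adj v b)
    (hne : s(u, a) ≠ s(v, b)) (h₁ : dist (x u) (x v) < dist (x u) (x a))
    (h₂ : dist (x a) (x b) < dist (x v) (x b)) : False := by
  have hub : (G.deleteEdges {s(u, a)}).Reachable u b :=
    (hG.reachable_deleteEdges_of_dist_lt hua h₁).trans
      ((deleteEdges_adj ..).mpr ⟨hvb, fun h => hne (Set.mem_singleton_iff.mp h).symm⟩).reachable
  have hbu : (G.deleteEdges {s(b, v)}).Reachable b u := by
    refine (hG.reachable_deleteEdges_of_dist_lt hvb.symm ?_).trans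
      ((deleteEdges_adj ..).mpr ⟨hua.symm, ?_⟩).reachable
    · rwa [dist_comm (x b), dist_comm (x b)]
    · rwa [Set.mem_singleton_iff, Sym2.eq_swap, Sym2.eq_swap (a := b)]
  have h₃ := hG.dist_le_of_reachable_deleteEdges hua hub .rfl
  have h₄ := hG.dist_le_of_reachable_deleteEdges hvb.symm hbu .rfl
  rw [dist_comm (x b)] at h₃ h₄
  linarith

theorem eq_of_dist_lt_of_dist_lt {ℓ : ℝ} {u a v b : Fin n} (hua : G.Adj u a) (hvb : G.Adj v b)
    (hℓu : ℓ ≤ dist (x u) (x a)) (hℓv : ℓ ≤ dist (x v) (x b))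
    (h₁ : dist (x u) (x v) < ℓ) (h₂ : dist (x a) (x b) < ℓ) : u = v := by
  by_contra huv
  refine hG.false_of_dist_lt_of_dist_lt hua hvb (fun h => ?_) (by linarith) (by linarith)
  rcases Sym2.eq_iff.mp h with ⟨rfl, -⟩ | ⟨rfl, rfl⟩
  · exact huv rfl
  · exact hℓu.not_gt h₁

end IsMST

end MST

section Grid

variable {ι : Type*} [Fintype ι]

def gridCell (p : EuclideanSpace ℝ ι) (s : ℝ) (q : EuclideanSpace ℝ ι) : ι → ℤ :=
  fun j => ⌊(q j - p j) / s⌋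

lemma dist_lt_of_gridCell_eq {p q q' : EuclideanSpace ℝ ι} {s : ℝ} (hs : 0 < s)
    (h : gridCell p s q = gridCell p s q') : dist q q' < (Fintype.card ι + 1) * s := by
  have hcoord : ∀ j, dist (q j) (q' j) ^ 2 ≤ s ^ 2 := fun j => by
    have := Int.abs_sub_lt_one_of_floor_eq_floor (congrFun h j)
    rw [← sub_div, sub_sub_sub_cancel_right, abs_div, abs_of_pos hs, div_lt_one hs] at this
    rw [Real.dist_eq]
    exact pow_le_pow_left₀ (abs_nonneg _) this.le 2
  rw [EuclideanSpace.dist_eq, Real.sqrt_lt' (by positivity)]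
  calc ∑ j, dist (q j) (q' j) ^ 2 ≤ ∑ _j : ι, s ^ 2 := Finset.sum_le_sum fun j _ => hcoord j
    _ = Fintype.card ι * s ^ 2 := by simp
    _ < ((Fintype.card ι + 1) * s) ^ 2 := by nlinarith [sq_pos_of_pos hs]

lemma gridCell_mem_Icc [DecidableEq ι] {p q : EuclideanSpace ℝ ι} {s : ℝ} (hs : 0 < s) {m : ℕ}
    (h : dist p q ≤ m * s) :
    gridCell p s q ∈ Finset.Icc (fun _ => -(m : ℤ)) (fun _ => (m : ℤ)) := by
  refine Finset.mem_Icc.mpr ⟨fun j => ?_, fun j => ?_⟩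
  all_goals
    have hj : |q j - p j| ≤ m * s := by
      rw [abs_sub_comm]
      exact ((Real.dist_eq _ _).symm.trans_le (PiLp.dist_apply_le p q j)).trans h
    rw [abs_le] at hj
  · rw [gridCell, Int.le_floor, le_div_iff₀ hs]
    push_cast
    linarith
  · rw [gridCell, Int.floor_le_iff, div_lt_iff₀ hs]
    push_cast
    linarith

lemma card_Icc_const [DecidableEq ι] (m : ℕ) :
    (Finset.Icc (fun _ : ι => -(m : ℤ)) (fun _ => (m : ℤ))).card =
      (2 * m + 1) ^ Fintype.card ι := by
  rw [Pi.card_Icc, Finset.prod_const, Int.card_Icc, Finset.card_univ]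
  congr 1
  omega

end Grid

section Dyadic

lemma mem_Ico_zpow_log_div {b : ℕ} (hb : 1 < b) {a r : ℝ} (ha : 0 < a) (hr : 0 < r) :
    r ∈ Set.Ico ((b : ℝ) ^ Int.log b (r / a) * a) (b * ((b : ℝ) ^ Int.log b (r / a) * a)) := by
  have hlo := Int.zpow_log_le_self hb (div_pos hr ha)
  have hhi := Int.lt_zpow_succ_log_self hb (r / a)
  rw [zpow_add_one₀ (by positivity), le_div_iff₀ ha] at *
  rw [div_lt_iff₀ ha] at hhi
  exact ⟨hlo, by linarith⟩

lemma cast_toNat_log_add_one_le (b : ℕ) {r : ℝ} (hr : 1 ≤ r) :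
    (((Int.log b r + 1).toNat : ℕ) : ℝ) ≤ ⌈Real.logb b r⌉ + 1 := by
  have hlog : 0 ≤ Int.log b r := Int.log_one_right (R := ℝ) b ▸ Int.log_mono_right one_pos hr
  have hceil : Int.log b r ≤ ⌈Real.logb b r⌉ :=
    Real.floor_logb_natCast (by linarith) ▸ Int.floor_le_ceil _
  rw [← Int.cast_natCast, Int.toNat_of_nonneg (by omega)]
  exact_mod_cast Int.add_le_add_right hceil 1

end Dyadic

section Interference

variable {d n : ℕ} {x : Fin n → Pt d} {G : SimpleGraph (Fin n)}

lemma exists_adj_rad_eq_dist {u a : Fin n} (h : G.Adj u a) :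
    ∃ b, G.Adj u b ∧ rad x G u = dist (x u) (x b) := by
  obtain ⟨b, hb, hsup⟩ := Finset.exists_mem_eq_sup {j | G.Adj u j} ⟨a, by simpa using h⟩
    fun j => (⟨dist (x u) (x j), dist_nonneg⟩ : NNReal)
  exact ⟨b, (Finset.mem_filter.mp hb).2, congrArg NNReal.toReal hsup⟩

lemma exists_adj_of_rad_pos {u : Fin n} (h : 0 < rad x G u) : ∃ a, G.Adj u a := by
  by_contra! hno
  rw [rad, Finset.filter_eq_empty_iff.mpr fun j _ => hno j] at h
  exact h.false

theorem IsMST.card_le_of_rad_mem_Ico (hG : IsMST x G) (p : Pt d) {ℓ : ℝ} (hℓ : 0 < ℓ)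
    (S : Finset (Fin n)) (hS : ∀ u ∈ S, dist p (x u) ≤ rad x G u ∧ rad x G u ∈ Set.Ico ℓ (2 * ℓ)) :
    S.card ≤ ((8 * d + 9) ^ d) ^ 2 := by
  have hfar : ∀ u ∈ S, ∃ b, G.Adj u b ∧ rad x G u = dist (x u) (x b) := by
    intro u hu
    obtain ⟨a, ha⟩ := exists_adj_of_rad_pos (hℓ.trans_le (hS u hu).2.1)
    exact exists_adj_rad_eq_dist ha
  choose! f hadj hrad using hfar
  have hmesh : 0 < ℓ / (d + 1) := by positivity
  have hclose : ∀ {q q' : Pt d}, gridCell p (ℓ / (d + 1)) q = gridCell p (ℓ / (d + 1)) q' →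
      dist q q' < ℓ := by
    intro q q' h
    have := dist_lt_of_gridCell_eq hmesh h
    rwa [Fintype.card_fin, mul_div_cancel₀ ℓ (by positivity)] at this
  set box :=
    Finset.Icc (fun _ : Fin d => -((4 * (d + 1) : ℕ) : ℤ)) (fun _ => ((4 * (d + 1) : ℕ) : ℤ))
  have hbox : ∀ q, dist p q < 2 * (2 * ℓ) → gridCell p (ℓ / (d + 1)) q ∈ box := by
    intro q hq
    refine gridCell_mem_Icc (m := 4 * (d + 1)) hmesh (hq.le.trans_eq ?_)
    field_simp
    push_cast
    ring
  have hmaps : ∀ u ∈ S,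
      (gridCell p (ℓ / (d + 1)) (x u), gridCell p (ℓ / (d + 1)) (x (f u))) ∈ box ×ˢ box := by
    intro u hu
    obtain ⟨hpu, -, hlt⟩ := hS u hu
    refine Finset.mem_product.mpr ⟨hbox _ (by linarith), hbox _ ?_⟩
    linarith [dist_triangle p (x u) (x (f u)), hrad u hu]
  have hinj : Set.InjOn
      (fun u => (gridCell p (ℓ / (d + 1)) (x u), gridCell p (ℓ / (d + 1)) (x (f u)))) S := by
    intro u hu v hv huv
    refine hG.eq_of_dist_lt_of_dist_lt (hadj u hu) (hadj v hv) ?_ ?_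
      (hclose (congrArg Prod.fst huv)) (hclose (congrArg Prod.snd huv))
    · exact hrad u hu ▸ (hS u hu).2.1
    · exact hrad v hv ▸ (hS v hv).2.1
  calc S.card ≤ (box ×ˢ box).card := Finset.card_le_card_of_injOn _ hmaps hinj
    _ = ((8 * d + 9) ^ d) ^ 2 := by
      rw [Finset.card_product, card_Icc_const, Fintype.card_fin, sq]
      ring_nf

theorem IsMST.interAt_le (hG : IsMST x G) (p : Pt d) {a b : ℝ} (ha : 0 < a)
    (hrad : ∀ u, rad x G u ∈ Set.Icc a b) :
    interAt x G p ≤ ((8 * d + 9) ^ d) ^ 2 * (Int.log 2 (b / a) + 1).toNat := by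
  have hscale : ∀ u, Int.log 2 (rad x G u / a) ∈ Finset.Icc 0 (Int.log 2 (b / a)) := fun u =>
    have hu := (one_le_div ha).mpr (hrad u).1
    Finset.mem_Icc.mpr ⟨Int.log_one_right (R := ℝ) 2 ▸ Int.log_mono_right one_pos hu,
      Int.log_mono_right (one_pos.trans_le hu) (div_le_div_of_nonneg_right (hrad u).2 ha.le)⟩
  rw [← sub_zero (Int.log 2 (b / a) + 1), ← Int.card_Icc]
  refine Finset.card_le_mul_card_image_of_maps_to (fun u _ => hscale u) _ fun k _ => ?_
  refine hG.card_le_of_rad_mem_Ico p (ℓ := 2 ^ k * a) (by positivity) _ fun u hu => ?_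
  obtain ⟨huS, rfl⟩ := Finset.mem_filter.mp hu
  refine ⟨(Finset.mem_filter.mp huS).2, ?_⟩
  exact_mod_cast mem_Ico_zpow_log_div one_lt_two ha (ha.trans_le (hrad u).1)

end Interference

theorem mst_interference_log_ratio_general (d : ℕ) :
    ∃ C : ℝ, 0 < C ∧
      ∀ (n : ℕ), 2 ≤ n → ∀ x : Fin n → Pt d, Function.Injective x →
        ∀ Dmax Dmin : ℝ,
          IsGreatest {s : ℝ | ∃ i j : Fin n, s = dist (x i) (x j)} Dmax →
          IsLeast {s : ℝ | ∃ i j : Fin n, i ≠ j ∧ s = dist (x i) (x j)} Dmin →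
          ∀ G : SimpleGraph (Fin n), IsMST x G →
            (interG x G : ℝ) ≤ C * ((⌈Real.logb 2 (Dmax / Dmin)⌉ : ℝ) + 1) := by
  refine ⟨((8 * d + 9) ^ d) ^ 2, by positivity, fun n _ x hx Dmax Dmin hmax hmin G hG => ?_⟩
  obtain ⟨⟨i, j, hij, hDmin⟩, hmin⟩ := hmin
  have hpos : 0 < Dmin := hDmin ▸ dist_pos.mpr (hx.ne hij)
  have : Nontrivial (Fin n) := ⟨i, j, hij⟩
  have hrad : ∀ u, rad x G u ∈ Set.Icc Dmin Dmax := fun u => by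
    obtain ⟨a, ha⟩ := hG.1.preconnected.exists_adj_of_nontrivial u
    obtain ⟨b, hb, hrb⟩ := exists_adj_rad_eq_dist ha
    exact ⟨hmin ⟨u, b, hb.ne, hrb⟩, hmax.2 ⟨u, b, hrb⟩⟩
  have hratio : 1 ≤ Dmax / Dmin := (one_le_div hpos).mpr (hmax.2 ⟨i, j, hDmin⟩)
  calc (interG x G : ℝ)
      ≤ ((((8 * d + 9) ^ d) ^ 2 * (Int.log 2 (Dmax / Dmin) + 1).toNat : ℕ) : ℝ) :=
        Nat.cast_le.mpr (Finset.sup_le fun i _ => hG.interAt_le _ hpos hrad)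
    _ ≤ ((8 * d + 9) ^ d) ^ 2 * ((⌈Real.logb 2 (Dmax / Dmin)⌉ : ℝ) + 1) := by
        push_cast
        gcongr
        exact_mod_cast cast_toNat_log_add_one_le 2 hratio

/-- For a finite set of at least two points in `ℝ^d` with distance ratio `D`
(the largest interpoint distance divided by the smallest interpoint distance),
every minimum spanning tree has interference `O(log D)`; one may take the
constant `C = 2 * 30 ^ d`. -/
theorem mst_interference_log_ratio (d : ℕ) (hd : 1 ≤ d) :
    ∃ C : ℝ, 0 < C ∧
      ∀ (n : ℕ), 2 ≤ n → ∀ x : Fin n → Pt d, Function.Injective x →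
        ∀ Dmax Dmin : ℝ,
          IsGreatest {s : ℝ | ∃ i j : Fin n, s = dist (x i) (x j)} Dmax →
          IsLeast {s : ℝ | ∃ i j : Fin n, i ≠ j ∧ s = dist (x i) (x j)} Dmin →
          ∀ G : SimpleGraph (Fin n), IsMST x G →
            (interG x G : ℝ) ≤ C * ((⌈Real.logb 2 (Dmax / Dmin)⌉ : ℝ) + 1) :=
  mst_interference_log_ratio_general d
end
end

section
/- Let d ≥ 1, let V ⊂ ℝ^d be a finite point set, let r > 0, and let T be a minimum spanning tree of V. Then T does not contain two distinct edges {a,b} and {c,d}, each of Euclidean length greater than r, such that ‖a − c‖ ≤ r and ‖b − d‖ ≤ r. -/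
open MeasureTheory Filter
open scoped Classical

noncomputable section

/-!
Delete the edge `{a, b}` from the tree. The edge `{c, e}` survives, so `c` and `e` end up on the
same side of the cut, the side of `a` or that of `b`. Exchanging `{a, b}` for `{e, b}` in the
first case, or for `{a, c}` in the second, gives a connected graph that is strictly shorter.
-/

namespace SimpleGraph

variable {V : Type*} {G : SimpleGraph V} {a b u v : V}

theorem Reachable.reachable_deleteEdges_or (h : G.Reachable u a) :
    (G.deleteEdges {s(a, b)}).Reachable u a ∨ (G.deleteEdges {s(a, b)}).Reachable u b := by
  set D := G.deleteEdges {s(a, b)}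
  obtain ⟨p⟩ := h
  suffices ∀ {u w : V}, G.Walk u w → D.Reachable w a ∨ D.Reachable w b →
      D.Reachable u a ∨ D.Reachable u b from this p (.inl .rfl)
  intro u w p
  induction p with
  | nil => exact id
  | @cons u w _ huw _ ih =>
    intro hw
    by_cases hab : s(u, w) = s(a, b)
    · rcases Sym2.eq_iff.mp hab with ⟨rfl, -⟩ | ⟨rfl, -⟩
      exacts [.inl .rfl, .inr .rfl]
    · have hD : D.Adj u w := by simpa [D, huw] using hab
      exact (ih hw).imp hD.reachable.trans hD.reachable.trans

theorem Connected.connected_deleteEdges_sup_edge (hG : G.Connected)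
    (hu : (G.deleteEdges {s(a, b)}).Reachable a u) (hv : (G.deleteEdges {s(a, b)}).Reachable b v) :
    (G.deleteEdges {s(a, b)} ⊔ edge u v).Connected := by
  set D := G.deleteEdges {s(a, b)}
  have hDH : D ≤ D ⊔ edge u v := le_sup_left
  have huv : (D ⊔ edge u v).Reachable u v := by
    rcases eq_or_ne u v with rfl | h
    · exact .rfl
    · exact Adj.reachable (by simp [edge_adj, h])
  have hab : (D ⊔ edge u v).Reachable a b := ((hu.mono hDH).trans huv).trans (hv.mono hDH).symm
  refine (connected_iff_exists_forall_reachable _).2 ⟨a, fun w => ?_⟩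
  rcases (hG.preconnected w a).reachable_deleteEdges_or (b := b) with h | h
  · exact (h.mono hDH).symm
  · exact hab.trans (h.mono hDH).symm

end SimpleGraph

open SimpleGraph

variable {d n : ℕ} (x : Fin n → Pt d)

theorem tlen_deleteEdges_add_dist {G : SimpleGraph (Fin n)} {a b : Fin n} (hab : G.Adj a b) :
    tlen x (G.deleteEdges {s(a, b)}) + dist (x a) (x b) = tlen x G := by
  simp only [tlen]
  rw [← Finset.sum_erase_add G.edgeFinset _ (by simpa using hab : s(a, b) ∈ G.edgeFinset)]
  congr 2
  ext
  simp [and_comm]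

theorem tlen_sup_edge_le (G : SimpleGraph (Fin n)) (u v : Fin n) :
    tlen x (G ⊔ edge u v) ≤ tlen x G + dist (x u) (x v) := by
  simp only [tlen]
  refine le_trans (Finset.sum_le_sum_of_subset_of_nonneg
    (t := insert s(u, v) G.edgeFinset) (fun e he => ?_) ?_) ?_
  · have he' : e ∈ (G ⊔ edge u v).edgeSet := by simpa using he
    rw [edgeSet_sup] at he'
    rcases he' with h | h
    · exact Finset.mem_insert_of_mem (G.mem_edgeFinset.mpr h)
    · exact Finset.mem_insert.mpr (.inl (edgeSet_edge_subset h))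
  · intro e _ _
    induction e using Sym2.ind
    rw [Sym2.lift_mk]
    exact dist_nonneg
  by_cases huv : s(u, v) ∈ G.edgeFinset
  · rw [Finset.insert_eq_of_mem huv]
    exact le_add_of_nonneg_right dist_nonneg
  · rw [Finset.sum_insert huv, add_comm]
    rfl

variable {x} in
/-- The cut property, by exchanging `{a, b}` for `{u, v}`. -/
theorem IsMST.dist_le_of_reachable_deleteEdges_s7 {G : SimpleGraph (Fin n)} (hG : IsMST x G)
    {a b u v : Fin n} (hab : G.Adj a b) (hu : (G.deleteEdges {s(a, b)}).Reachable a u)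
    (hv : (G.deleteEdges {s(a, b)}).Reachable b v) :
    dist (x a) (x b) ≤ dist (x u) (x v) := by
  have hmin := hG.2 _ (hG.1.connected_deleteEdges_sup_edge hu hv)
  have hadd := tlen_sup_edge_le x (G.deleteEdges {s(a, b)}) u v
  have hdel := tlen_deleteEdges_add_dist x hab
  linarith

theorem mst_no_two_close_long_edges_general (d n : ℕ) (x : Fin n → Pt d)
    (G : SimpleGraph (Fin n)) (hG : IsMST x G)
    (r : ℝ) (a b c e : Fin n)
    (hab : G.Adj a b) (hce : G.Adj c e) (hne : s(a, b) ≠ s(c, e))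
    (hlab : r < dist (x a) (x b))
    (hac : dist (x a) (x c) ≤ r) (hbe : dist (x b) (x e) ≤ r) :
    False := by
  have hce' : (G.deleteEdges {s(a, b)}).Adj c e := by simpa [hce] using hne.symm
  rcases (hG.1.preconnected c a).reachable_deleteEdges_or (b := b) with hca | hcb
  · have hle := hG.dist_le_of_reachable_deleteEdges_s7 hab (hca.symm.trans hce'.reachable) .rfl
    rw [dist_comm (x e)] at hle
    linarith
  · have hle := hG.dist_le_of_reachable_deleteEdges_s7 hab .rfl hcb.symm
    linarith

/-- A minimum spanning tree of a finite point set in `ℝ^d` cannot contain two distinct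
edges `{a, b}` and `{c, e}`, each of length greater than `r`, with `dist a c ≤ r` and
`dist b e ≤ r`. -/
theorem mst_no_two_close_long_edges (d n : ℕ) (hd : 1 ≤ d) (x : Fin n → Pt d)
    (hx : Function.Injective x) (G : SimpleGraph (Fin n)) (hG : IsMST x G)
    (r : ℝ) (hr : 0 < r) (a b c e : Fin n)
    (hab : G.Adj a b) (hce : G.Adj c e) (hne : s(a, b) ≠ s(c, e))
    (hlab : r < dist (x a) (x b)) (hlce : r < dist (x c) (x e))
    (hac : dist (x a) (x c) ≤ r) (hbe : dist (x b) (x e) ≤ r) :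
    False :=
  mst_no_two_close_long_edges_general d n x G hG r a b c e hab hce hne hlab hac hbe
end
end
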